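/- arXiv:1503.05850 — 2 statements merged into one kernel-verified Lean document; each statement's English description precedes it below -/
import Mathlib

section
/- Let C be a union of d distinct lines in ℙ² over a field and let P₀, P₁, P₂ be three distinct points with m(P₀) + m(P₁) + m(P₂) = d + 3. Then: (1) P₀, P₁, P₂ are not collinear; (2) the three lines joining pairs of the points P₀, P₁, P₂ are components of C; (3) every line of C passes through at least one of P₀, P₁, P₂. -/
open scoped Classical

/-- A (projective) line in `ℙ²` over `K`: the zero locus of a nonzero linear functional. -/
def IsLine {K : Type*} [Field K] (ℓ : Set (Projectivization K (Fin 3 → K))) : Prop :=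
  ∃ φ : Module.Dual K (Fin 3 → K), φ ≠ 0 ∧ ℓ = {P | φ P.rep = 0}

/-- The number of lines of the arrangement `L` passing through `P`. -/
noncomputable def mult {K : Type*} [Field K]
    (L : Finset (Set (Projectivization K (Fin 3 → K))))
    (P : Projectivization K (Fin 3 → K)) : ℕ :=
  (L.filter fun ℓ => P ∈ ℓ).card

/-- Three points of `ℙ²` are collinear if some line contains all of them. -/
def Collinear3 {K : Type*} [Field K] (P₀ P₁ P₂ : Projectivization K (Fin 3 → K)) : Prop :=
  ∃ ℓ : Set (Projectivization K (Fin 3 → K)), IsLine ℓ ∧ P₀ ∈ ℓ ∧ P₁ ∈ ℓ ∧ P₂ ∈ ℓ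

/-! Two distinct points lie on at most one common line, so the pencils of lines of `C` through
`P₀`, `P₁`, `P₂` pairwise share at most one line. By inclusion–exclusion their union, which has at
most `d` elements, has `d + 3 - (pairwise overlaps) + (triple overlap)` elements. Hence every pair
of pencils shares exactly one line (the join of the two points), no line lies in all three pencils,
and the pencils exhaust `C`. Collinearity would put the join of `P₀` and `P₁` in all three. -/

lemma Submodule.mem_projectivization_iff_rep_mem {K V : Type*} [DivisionRing K]
    [AddCommGroup V] [Module K V] (s : Submodule K V) (P : Projectivization K V) :
    P ∈ s.projectivization ↔ P.rep ∈ s := by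
  conv_lhs => rw [← P.mk_rep]
  exact s.mk_mem_projectivization_iff _

lemma finrank_ker_eq_two_of_ne_zero {K : Type*} [Field K] {φ : Module.Dual K (Fin 3 → K)}
    (hφ : φ ≠ 0) : Module.finrank K (LinearMap.ker φ) = 2 := by
  have := φ.finrank_ker_add_one_of_ne_zero hφ
  rw [Module.finrank_fin_fun] at this
  omega

namespace IsLine

variable {K : Type*} [Field K]

theorem eq_of_mem_of_mem {ℓ₁ ℓ₂ : Set (Projectivization K (Fin 3 → K))}
    (h₁ : IsLine ℓ₁) (h₂ : IsLine ℓ₂) {P Q : Projectivization K (Fin 3 → K)} (hPQ : P ≠ Q)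
    (hP₁ : P ∈ ℓ₁) (hQ₁ : Q ∈ ℓ₁) (hP₂ : P ∈ ℓ₂) (hQ₂ : Q ∈ ℓ₂) : ℓ₁ = ℓ₂ := by
  obtain ⟨φ₁, hφ₁, rfl⟩ := h₁
  obtain ⟨φ₂, hφ₂, rfl⟩ := h₂
  have hmem {φ : Module.Dual K (Fin 3 → K)} {R : Projectivization K (Fin 3 → K)}
      (hR : φ R.rep = 0) : R ∈ (LinearMap.ker φ).projectivization :=
    ((LinearMap.ker φ).mem_projectivization_iff_rep_mem R).2 hR
  have hker : LinearMap.ker φ₁ = LinearMap.ker φ₂ :=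
    Projectivization.line_unique hPQ _ _ (finrank_ker_eq_two_of_ne_zero hφ₁)
      (finrank_ker_eq_two_of_ne_zero hφ₂) (hmem hP₁) (hmem hQ₁) (hmem hP₂) (hmem hQ₂)
  ext R
  simp only [Set.mem_ofPred_eq, ← LinearMap.mem_ker, hker]

end IsLine

lemma card_filter_mem_and_mem_le_one {K : Type*} [Field K]
    {L : Finset (Set (Projectivization K (Fin 3 → K)))} (hL : ∀ ℓ ∈ L, IsLine ℓ)
    {P Q : Projectivization K (Fin 3 → K)} (hPQ : P ≠ Q) :
    (L.filter fun ℓ => P ∈ ℓ ∧ Q ∈ ℓ).card ≤ 1 := by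
  refine Finset.card_le_one.2 fun ℓ₁ h₁ ℓ₂ h₂ => ?_
  rw [Finset.mem_filter] at h₁ h₂
  exact (hL _ h₁.1).eq_of_mem_of_mem (hL _ h₂.1) hPQ h₁.2.1 h₁.2.2 h₂.2.1 h₂.2.2

namespace Finset

variable {α : Type*} [DecidableEq α]

theorem card_union_union_add_card_inter (A B C : Finset α) :
    #(A ∪ B ∪ C) + #(A ∩ B) + #(A ∩ C) + #(B ∩ C) = #A + #B + #C + #(A ∩ B ∩ C) := by
  have hAB := card_union_add_card_inter A B
  have hABC := card_union_add_card_inter (A ∪ B) C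
  have hACBC := card_union_add_card_inter (A ∩ C) (B ∩ C)
  rw [union_inter_distrib_right] at hABC
  rw [inter_inter_inter_comm, inter_self] at hACBC
  omega

theorem card_inter_eq_one_of_card_add_card_add_card_eq {s A B C : Finset α}
    (hA : A ⊆ s) (hB : B ⊆ s) (hC : C ⊆ s)
    (hAB : #(A ∩ B) ≤ 1) (hAC : #(A ∩ C) ≤ 1) (hBC : #(B ∩ C) ≤ 1)
    (h : #A + #B + #C = #s + 3) :
    #(A ∩ B) = 1 ∧ #(A ∩ C) = 1 ∧ #(B ∩ C) = 1 ∧ A ∩ B ∩ C = ∅ ∧ A ∪ B ∪ C = s := by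
  have hsub : A ∪ B ∪ C ⊆ s := union_subset (union_subset hA hB) hC
  have hunion := card_le_card hsub
  have hie := card_union_union_add_card_inter A B C
  have htriple : #(A ∩ B ∩ C) = 0 := by omega
  exact ⟨by omega, by omega, by omega, card_eq_zero.1 htriple,
    eq_of_subset_of_card_le hsub (by omega)⟩

end Finset

theorem stmt_5 {K : Type*} [Field K] (d : ℕ)
    (L : Finset (Set (Projectivization K (Fin 3 → K))))
    (hL : ∀ ℓ ∈ L, IsLine ℓ) (hcard : L.card = d)
    (P₀ P₁ P₂ : Projectivization K (Fin 3 → K))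
    (h01 : P₀ ≠ P₁) (h02 : P₀ ≠ P₂) (h12 : P₁ ≠ P₂)
    (hsum : mult L P₀ + mult L P₁ + mult L P₂ = d + 3) :
    ¬ Collinear3 P₀ P₁ P₂ ∧
    (∃ ℓ ∈ L, P₀ ∈ ℓ ∧ P₁ ∈ ℓ) ∧
    (∃ ℓ ∈ L, P₀ ∈ ℓ ∧ P₂ ∈ ℓ) ∧
    (∃ ℓ ∈ L, P₁ ∈ ℓ ∧ P₂ ∈ ℓ) ∧
    ∀ ℓ ∈ L, P₀ ∈ ℓ ∨ P₁ ∈ ℓ ∨ P₂ ∈ ℓ := by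
  have hpair {P Q} (hPQ : P ≠ Q) : (L.filter (P ∈ ·) ∩ L.filter (Q ∈ ·)).card ≤ 1 := by
    rw [← Finset.filter_and]
    exact card_filter_mem_and_mem_le_one hL hPQ
  obtain ⟨h01', h02', h12', htriple, hcover⟩ :=
    Finset.card_inter_eq_one_of_card_add_card_add_card_eq (Finset.filter_subset _ L)
      (Finset.filter_subset _ L) (Finset.filter_subset _ L) (hpair h01) (hpair h02) (hpair h12)
      (hcard ▸ hsum)
  have hjoin {P Q} (h : (L.filter (P ∈ ·) ∩ L.filter (Q ∈ ·)).card = 1) :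
      ∃ ℓ ∈ L, P ∈ ℓ ∧ Q ∈ ℓ := by
    rw [← Finset.filter_nonempty_iff, Finset.filter_and, ← Finset.card_pos, h]
    exact one_pos
  refine ⟨?_, hjoin h01', hjoin h02', hjoin h12', fun ℓ hℓ => ?_⟩
  · rintro ⟨ℓ₀, hℓ₀, hP₀, hP₁, hP₂⟩
    obtain ⟨ℓ, hℓ, hP₀ℓ, hP₁ℓ⟩ := hjoin h01'
    obtain rfl := (hL ℓ hℓ).eq_of_mem_of_mem hℓ₀ h01 hP₀ℓ hP₁ℓ hP₀ hP₁
    have : ℓ ∈ L.filter (P₀ ∈ ·) ∩ L.filter (P₁ ∈ ·) ∩ L.filter (P₂ ∈ ·) := by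
      simp only [Finset.mem_inter, Finset.mem_filter]
      exact ⟨⟨⟨hℓ, hP₀⟩, hℓ, hP₁⟩, hℓ, hP₂⟩
    simp [htriple] at this
  · rw [← hcover] at hℓ
    simp only [Finset.mem_union, Finset.mem_filter] at hℓ
    tauto
end

section
/- Let C be a union of d distinct lines in ℙ² over a field and let P₀, P₁, P₂ be three distinct points with m(P₀) + m(P₁) + m(P₂) = d + 1. Then at most two lines of C pass through none of P₀, P₁, P₂, and every point Q ∉ {P₀, P₁, P₂} has multiplicity m(Q) ≤ 5. -/
open scoped Classical

section aux

variable {K : Type*} [Field K]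

lemma indep_of_ne {P Q : Projectivization K (Fin 3 → K)} (h : P ≠ Q) :
    LinearIndependent K ![P.rep, Q.rep] := by
  rw [LinearIndependent.pair_iff]
  intro s t hst
  by_contra hc
  push_neg at hc
  rcases eq_or_ne s 0 with hs | hs
  · have ht := hc hs
    subst hs
    simp only [zero_smul, zero_add, smul_eq_zero] at hst
    exact Q.rep_nonzero (hst.resolve_left ht)
  · apply h
    have h1 : s • P.rep = -(t • Q.rep) := eq_neg_of_add_eq_zero_left hst
    have h2 : P.rep = (-(s⁻¹ * t)) • Q.rep := by
      rw [← inv_smul_smul₀ hs P.rep, h1]; module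
    rw [← P.mk_rep, ← Q.mk_rep, Projectivization.mk_eq_mk_iff' K _ _ P.rep_nonzero Q.rep_nonzero]
    exact ⟨_, h2.symm⟩

lemma ker_eq_span {φ : Module.Dual K (Fin 3 → K)} (hφ : φ ≠ 0)
    {P Q : Projectivization K (Fin 3 → K)} (hPQ : P ≠ Q)
    (hP : φ P.rep = 0) (hQ : φ Q.rep = 0) :
    LinearMap.ker φ = Submodule.span K {P.rep, Q.rep} := by
  have hli := indep_of_ne hPQ
  have hr : Set.range ![P.rep, Q.rep] = {P.rep, Q.rep} := by
    ext x; simp [Fin.exists_fin_two]; tauto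
  have hW : Module.finrank K (Submodule.span K ({P.rep, Q.rep} : Set (Fin 3 → K))) = 2 := by
    have := finrank_span_eq_card hli
    rw [hr] at this
    simpa using this
  have hranget : LinearMap.range φ = ⊤ := by
    rw [Submodule.eq_top_iff']
    intro y
    obtain ⟨x, hx⟩ : ∃ x, φ x ≠ 0 := by
      by_contra hcon; push_neg at hcon
      exact hφ (LinearMap.ext hcon)
    exact ⟨(y / φ x) • x, by simp [div_mul_cancel₀, hx]⟩
  have hker : Module.finrank K (LinearMap.ker φ) = 2 := by
    have h3 := LinearMap.finrank_range_add_finrank_ker φ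
    rw [hranget, finrank_top, Module.finrank_self,
      show Module.finrank K (Fin 3 → K) = 3 by simp] at h3
    omega
  refine (Submodule.eq_of_le_of_finrank_le ?_ ?_).symm
  · rw [Submodule.span_le]
    rintro x (rfl | rfl) <;> simpa
  · rw [hW, hker]

lemma line_unique {ℓ ℓ' : Set (Projectivization K (Fin 3 → K))}
    (hℓ : IsLine ℓ) (hℓ' : IsLine ℓ')
    {P Q : Projectivization K (Fin 3 → K)} (hPQ : P ≠ Q)
    (hP : P ∈ ℓ) (hQ : Q ∈ ℓ) (hP' : P ∈ ℓ') (hQ' : Q ∈ ℓ') : ℓ = ℓ' := by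
  obtain ⟨φ, hφ, rfl⟩ := hℓ
  obtain ⟨ψ, hψ, rfl⟩ := hℓ'
  simp only [Set.mem_setOf_eq] at hP hQ hP' hQ'
  have h1 := ker_eq_span hφ hPQ hP hQ
  have h2 := ker_eq_span hψ hPQ hP' hQ'
  ext x
  simp only [Set.mem_setOf_eq, ← LinearMap.mem_ker, h1, h2]

lemma pair_card_le_one (L : Finset (Set (Projectivization K (Fin 3 → K))))
    (hL : ∀ ℓ ∈ L, IsLine ℓ) {P Q : Projectivization K (Fin 3 → K)} (h : P ≠ Q) :
    (L.filter fun ℓ => P ∈ ℓ ∧ Q ∈ ℓ).card ≤ 1 := by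
  apply Finset.card_le_one.mpr
  intro a ha b hb
  simp only [Finset.mem_filter] at ha hb
  exact line_unique (hL a ha.1) (hL b hb.1) h ha.2.1 ha.2.2 hb.2.1 hb.2.2

end aux

theorem stmt_9 {K : Type*} [Field K] (d : ℕ)
    (L : Finset (Set (Projectivization K (Fin 3 → K))))
    (hL : ∀ ℓ ∈ L, IsLine ℓ) (hcard : L.card = d)
    (P₀ P₁ P₂ : Projectivization K (Fin 3 → K))
    (h01 : P₀ ≠ P₁) (h02 : P₀ ≠ P₂) (h12 : P₁ ≠ P₂)
    (hsum : mult L P₀ + mult L P₁ + mult L P₂ = d + 1) :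
    (L.filter fun ℓ => P₀ ∉ ℓ ∧ P₁ ∉ ℓ ∧ P₂ ∉ ℓ).card ≤ 2 ∧
    ∀ Q : Projectivization K (Fin 3 → K),
      Q ∉ ({P₀, P₁, P₂} : Set (Projectivization K (Fin 3 → K))) → mult L Q ≤ 5 := by
  set A₀ := L.filter fun ℓ => P₀ ∈ ℓ with hA₀
  set A₁ := L.filter fun ℓ => P₁ ∈ ℓ with hA₁
  set A₂ := L.filter fun ℓ => P₂ ∈ ℓ with hA₂
  set M := L.filter fun ℓ => P₀ ∉ ℓ ∧ P₁ ∉ ℓ ∧ P₂ ∉ ℓ with hM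
  have hi01 : (A₀ ∩ A₁).card ≤ 1 := by
    rw [hA₀, hA₁, ← Finset.filter_and]; exact pair_card_le_one L hL h01
  have hi02 : (A₀ ∩ A₂).card ≤ 1 := by
    rw [hA₀, hA₂, ← Finset.filter_and]; exact pair_card_le_one L hL h02
  have hi12 : (A₁ ∩ A₂).card ≤ 1 := by
    rw [hA₁, hA₂, ← Finset.filter_and]; exact pair_card_le_one L hL h12
  have hu01 : A₀.card + A₁.card ≤ (A₀ ∪ A₁).card + 1 := by
    have := Finset.card_union_add_card_inter A₀ A₁
    omega
  have hint : ((A₀ ∪ A₁) ∩ A₂).card ≤ 2 := by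
    rw [Finset.union_inter_distrib_right]
    calc ((A₀ ∩ A₂) ∪ (A₁ ∩ A₂)).card ≤ (A₀ ∩ A₂).card + (A₁ ∩ A₂).card :=
          Finset.card_union_le _ _
      _ ≤ 2 := by omega
  have hu : d + 1 ≤ (A₀ ∪ A₁ ∪ A₂).card + 3 := by
    have := Finset.card_union_add_card_inter (A₀ ∪ A₁) A₂
    have hsum' : A₀.card + A₁.card + A₂.card = d + 1 := hsum
    omega
  have hsub : A₀ ∪ A₁ ∪ A₂ ⊆ L := by
    apply Finset.union_subset (Finset.union_subset ?_ ?_) ?_ <;> exact Finset.filter_subset _ _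
  have hMeq : M = L \ (A₀ ∪ A₁ ∪ A₂) := by
    ext ℓ
    simp only [hM, hA₀, hA₁, hA₂, Finset.mem_filter, Finset.mem_sdiff, Finset.mem_union]
    tauto
  have hMcard : M.card ≤ 2 := by
    rw [hMeq, Finset.card_sdiff_of_subset hsub]
    have := Finset.card_le_card hsub
    omega
  refine ⟨hMcard, ?_⟩
  intro Q hQ
  simp only [Set.mem_insert_iff, Set.mem_singleton_iff] at hQ
  push_neg at hQ
  obtain ⟨hQ0, hQ1, hQ2⟩ := hQ
  have hsubQ : (L.filter fun ℓ => Q ∈ ℓ) ⊆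
      (L.filter fun ℓ => Q ∈ ℓ ∧ P₀ ∈ ℓ) ∪ (L.filter fun ℓ => Q ∈ ℓ ∧ P₁ ∈ ℓ) ∪
      (L.filter fun ℓ => Q ∈ ℓ ∧ P₂ ∈ ℓ) ∪ M := by
    intro ℓ hℓ
    simp only [Finset.mem_filter] at hℓ
    simp only [Finset.mem_union, Finset.mem_filter, hM]
    tauto
  calc mult L Q ≤ ((L.filter fun ℓ => Q ∈ ℓ ∧ P₀ ∈ ℓ) ∪ (L.filter fun ℓ => Q ∈ ℓ ∧ P₁ ∈ ℓ) ∪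
      (L.filter fun ℓ => Q ∈ ℓ ∧ P₂ ∈ ℓ) ∪ M).card := Finset.card_le_card hsubQ
    _ ≤ (L.filter fun ℓ => Q ∈ ℓ ∧ P₀ ∈ ℓ).card + (L.filter fun ℓ => Q ∈ ℓ ∧ P₁ ∈ ℓ).card +
        (L.filter fun ℓ => Q ∈ ℓ ∧ P₂ ∈ ℓ).card + M.card := by
      calc _ ≤ _ := Finset.card_union_le _ M
        _ ≤ _ := by
          gcongr
          calc _ ≤ _ := Finset.card_union_le _ _
            _ ≤ _ := by gcongr; exact Finset.card_union_le _ _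
    _ ≤ 1 + 1 + 1 + 2 := by
      gcongr
      · exact pair_card_le_one L hL hQ0
      · exact pair_card_le_one L hL hQ1
      · exact pair_card_le_one L hL hQ2
    _ = 5 := rfl
end
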